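/- Violated KKT conditions of the smooth function are preserved by every perturbed mesa maximum: Let h : [0,1]² → ℝ be continuously differentiable with L-Lipschitz gradient, where L ≤ 1/100, and suppose h(x) ∈ [0.49, 0.51] and ∇h(x) ∈ [−0.001, 0.001]² for all x ∈ [0,1]². Let ε > 0, let ℓ = 1/N for some positive integer N with ℓ ≤ ε/100, let Γ ≥ 12/ℓ, and let G = {0, ℓ, 2ℓ, …, 1−ℓ, 1}². Suppose a : G → [0.45, 0.55] satisfies |a(p) − h(p)| ≤ ℓ²/100 for all p ∈ G, and g : G → [−0.01, 0.01]² satisfies ‖2g(p) − ∇h(p)‖_∞ ≤ ℓ/100 for all p ∈ G. Let δ' ≤ ℓ²/100 and let f : [0,1]² → ℝ be any function of the form f(x) = max_{p ∈ G} M(x; p, A^p, g(p)), where for each p ∈ G, A^p = (a_c^p, a_r^p, a_t^p, a_l^p, a_b^p) with |a_i^p − a(p)| ≤ δ' for all i ∈ {c, r, t, l, b}. Then for any x ∈ [0,1]² at which f is differentiable and any j ∈ {1,2}: if x_j > 0 and ∂h/∂x_j(x) > ε then ∂f/∂x_j(x) > ε/3, and if x_j < 1 and ∂h/∂x_j(x)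 < −ε then ∂f/∂x_j(x) < −ε/3. -/

import Mathlib

noncomputable section

/-- The central affine piece of a mesa. -/
def Pc (p : ℝ × ℝ) (a : ℝ) (g : ℝ × ℝ) (x : ℝ × ℝ) : ℝ :=
  (x.1 - p.1) * g.1 + (x.2 - p.2) * g.2 + a

/-- The right affine piece of a mesa. -/
def Pr (ℓ Γ : ℝ) (p : ℝ × ℝ) (a : ℝ) (g : ℝ × ℝ) (x : ℝ × ℝ) : ℝ :=
  (x.1 - p.1) * (-Γ + g.1) + (x.2 - p.2) * g.2 + a + Γ * ℓ / 2

/-- The top affine piece of a mesa. -/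
def Pt (ℓ Γ : ℝ) (p : ℝ × ℝ) (a : ℝ) (g : ℝ × ℝ) (x : ℝ × ℝ) : ℝ :=
  (x.1 - p.1) * g.1 + (x.2 - p.2) * (-Γ + g.2) + a + Γ * ℓ / 2

/-- The left affine piece of a mesa. -/
def Pl (ℓ Γ : ℝ) (p : ℝ × ℝ) (a : ℝ) (g : ℝ × ℝ) (x : ℝ × ℝ) : ℝ :=
  (x.1 - p.1) * (Γ + g.1) + (x.2 - p.2) * g.2 + a + Γ * ℓ / 2

/-- The bottom affine piece of a mesa. -/
def Pb (ℓ Γ : ℝ) (p : ℝ × ℝ) (a : ℝ) (g : ℝ × ℝ) (x : ℝ × ℝ) : ℝ :=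
  (x.1 - p.1) * g.1 + (x.2 - p.2) * (Γ + g.2) + a + Γ * ℓ / 2

/-- The mesa function with center `p`, values `A` (indexed `0 = c, 1 = r, 2 = t, 3 = l, 4 = b`)
and gradient `g`: the minimum of the five affine pieces. -/
def mesa (ℓ Γ : ℝ) (p : ℝ × ℝ) (A : Fin 5 → ℝ) (g : ℝ × ℝ) (x : ℝ × ℝ) : ℝ :=
  min (Pc p (A 0) g x)
    (min (Pr ℓ Γ p (A 1) g x) (min (Pt ℓ Γ p (A 2) g x) (min (Pl ℓ Γ p (A 3) g x) (Pb ℓ Γ p (A 4) g x))))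

/-- The index set of the grid `{0, ℓ, 2ℓ, …, 1}²` where `ℓ = 1/N`. -/
def grid (N : ℕ) : Finset (ℕ × ℕ) := Finset.range (N + 1) ×ˢ Finset.range (N + 1)

/-- The grid point corresponding to an index pair. -/
def pt (ℓ : ℝ) (k : ℕ × ℕ) : ℝ × ℝ := ((k.1 : ℝ) * ℓ, (k.2 : ℝ) * ℓ)

theorem grid_nonempty (N : ℕ) : (grid N).Nonempty :=
  ⟨(0, 0), by simp [grid]⟩

/-- The unit square `[0,1]²` in `ℝ × ℝ`. -/
def unitSq : Set (ℝ × ℝ) := {x | x.1 ∈ Set.Icc (0 : ℝ) 1 ∧ x.2 ∈ Set.Icc (0 : ℝ) 1}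

/-- The continuous linear functional `w ↦ ⟨v, w⟩` on `ℝ × ℝ` given by a gradient vector `v`. -/
def gradCLM (v : ℝ × ℝ) : ℝ × ℝ →L[ℝ] ℝ :=
  v.1 • (ContinuousLinearMap.fst ℝ ℝ ℝ) + v.2 • (ContinuousLinearMap.snd ℝ ℝ ℝ)

/-!
Let `k` be a grid point whose mesa is active at `x`, i.e. attains the maximum `f x`. The mesa of
the grid point nearest to `x` shows `f ≥ 0.43` on the square, while the walls of a mesa drop by
`Γ ℓ / 2 ≥ 6` within distance `ℓ` of its centre, so `x` lies within `ℓ` of `p_k`. Suppose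
`∂ₛh(x) > ε` in one of the four axis directions `s`. If the central plane of mesa `k` were not
strictly below its `s`-wall at `x`, then `x` would lie about `ℓ / 2` beyond `p_k` in direction `s`,
the neighbour `p_k + ℓ s` would be a grid point, and since the values `a` grow by about `ℓ ∂ₛh`
from `p_k` to the neighbour while the slopes `g ≈ ∇h / 2` only lose about `ℓ ∂ₛh / 2`, the
neighbour's mesa would exceed `f x` at `x`. So moving from `x` in direction `s` the active mesa,
hence `f`, grows at rate at least `⟨g_k, s⟩ ≈ ∂ₛh(x) / 2 > ε / 3`.
-/

open Set Filter Topology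

theorem gradCLM_apply (v w : ℝ × ℝ) : gradCLM v w = v.1 * w.1 + v.2 * w.2 := by
  simp [gradCLM]

theorem gradCLM_comm (v w : ℝ × ℝ) : gradCLM v w = gradCLM w v := by
  rw [gradCLM_apply, gradCLM_apply]; ring

theorem gradCLM_sub (v w : ℝ × ℝ) : gradCLM (v - w) = gradCLM v - gradCLM w :=
  ContinuousLinearMap.ext fun z => by
    simp only [sub_apply, gradCLM_apply, Prod.fst_sub, Prod.snd_sub]; ring

theorem abs_gradCLM_apply_le (v w : ℝ × ℝ) : |gradCLM v w| ≤ 2 * ‖v‖ * ‖w‖ := by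
  have h₁ : |v.1 * w.1| ≤ ‖v‖ * ‖w‖ := by
    rw [abs_mul]; exact mul_le_mul (norm_fst_le v) (norm_fst_le w) (abs_nonneg _) (norm_nonneg _)
  have h₂ : |v.2 * w.2| ≤ ‖v‖ * ‖w‖ := by
    rw [abs_mul]; exact mul_le_mul (norm_snd_le v) (norm_snd_le w) (abs_nonneg _) (norm_nonneg _)
  rw [gradCLM_apply]
  linarith [abs_add_le (v.1 * w.1) (v.2 * w.2)]

theorem norm_gradCLM_le (v : ℝ × ℝ) : ‖gradCLM v‖ ≤ 2 * ‖v‖ :=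
  ContinuousLinearMap.opNorm_le_bound _ (by positivity) (abs_gradCLM_apply_le v)

theorem convex_unitSq : Convex ℝ unitSq :=
  (convex_Icc 0 1).prod (convex_Icc 0 1)

theorem norm_sub_le_one_of_mem_unitSq {x y : ℝ × ℝ} (hx : x ∈ unitSq) (hy : y ∈ unitSq) :
    ‖x - y‖ ≤ 1 := by
  obtain ⟨⟨hx₁, hx₁'⟩, hx₂, hx₂'⟩ := hx
  obtain ⟨⟨hy₁, hy₁'⟩, hy₂, hy₂'⟩ := hy
  rw [norm_prod_le_iff, Real.norm_eq_abs, Real.norm_eq_abs, abs_le, abs_le]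
  simp only [Prod.fst_sub, Prod.snd_sub]
  refine ⟨⟨?_, ?_⟩, ?_, ?_⟩ <;> linarith

theorem abs_sub_sub_gradCLM_le {s : Set (ℝ × ℝ)} (hs : Convex ℝ s) {h : ℝ × ℝ → ℝ}
    {h' : ℝ × ℝ → ℝ × ℝ} (hderiv : ∀ y ∈ s, HasFDerivWithinAt h (gradCLM (h' y)) s y)
    {x : ℝ × ℝ} {C : ℝ} (hC : ∀ y ∈ s, ‖h' y - h' x‖ ≤ C) {p q : ℝ × ℝ} (hp : p ∈ s)
    (hq : q ∈ s) : |h q - h p - gradCLM (h' x) (q - p)| ≤ 2 * C * ‖q - p‖ := by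
  refine hs.norm_image_sub_le_of_norm_hasFDerivWithin_le' hderiv (fun y hy => ?_) hp hq
  rw [← gradCLM_sub]
  exact (norm_gradCLM_le _).trans (by linarith [hC y hy])

theorem le_fderiv_apply_of_forall_add_mul_le {E : Type*} [NormedAddCommGroup E]
    [NormedSpace ℝ E] {f : E → ℝ} {x v : E} (hf : DifferentiableAt ℝ f x) {c τ₀ : ℝ}
    (hτ₀ : 0 < τ₀) (hle : ∀ τ ∈ Ioc 0 τ₀, f x + c * τ ≤ f (x + τ • v)) :
    c ≤ fderiv ℝ f x v := by
  have hline : HasDerivAt (fun τ : ℝ => x + τ • v) v 0 := by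
    simpa using ((hasDerivAt_id (0 : ℝ)).smul_const v).const_add x
  have hφ : HasDerivAt (fun τ : ℝ => f (x + τ • v)) (fderiv ℝ f x v) 0 := by
    have hf' : HasFDerivAt f (fderiv ℝ f x) (x + (0 : ℝ) • v) := by
      simpa using hf.hasFDerivAt
    exact hf'.comp_hasDerivAt 0 hline
  have hslope : Tendsto (slope (fun τ : ℝ => f (x + τ • v)) 0) (𝓝[>] 0) (𝓝 (fderiv ℝ f x v)) :=
    (hasDerivAt_iff_tendsto_slope.1 hφ).mono_left (nhdsWithin_mono _ fun τ hτ => ne_of_gt hτ)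
  refine ge_of_tendsto hslope ?_
  filter_upwards [Ioc_mem_nhdsGT hτ₀] with τ hτ
  rw [slope_def_field, zero_smul, add_zero, sub_zero, le_div_iff₀ hτ.1]
  linarith [hle τ hτ]

/-- The walls `r, t, l, b` of a mesa; the wall `s` descends with slope `Γ` in the direction
`s.normal`. -/
inductive Side
  | right
  | top
  | left
  | bottom

namespace Side

def normal : Side → ℝ × ℝ
  | right => (1, 0)
  | top => (0, 1)
  | left => (-1, 0)
  | bottom => (0, -1)

def idx : Side → Fin 5
  | right => 1
  | top => 2
  | left => 3
  | bottom => 4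

def piece (s : Side) (ℓ Γ : ℝ) (p : ℝ × ℝ) (a : ℝ) (g : ℝ × ℝ) : ℝ × ℝ → ℝ :=
  match s with
  | right => Pr ℓ Γ p a g
  | top => Pt ℓ Γ p a g
  | left => Pl ℓ Γ p a g
  | bottom => Pb ℓ Γ p a g

theorem forall_iff {P : Side → Prop} : (∀ s, P s) ↔ P right ∧ P top ∧ P left ∧ P bottom :=
  ⟨fun h => ⟨h _, h _, h _, h _⟩, fun ⟨h₁, h₂, h₃, h₄⟩ s => by cases s <;> assumption⟩

theorem normal_left : left.normal = -right.normal := by simp [normal]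

theorem normal_bottom : bottom.normal = -top.normal := by simp [normal]

theorem norm_normal (s : Side) : ‖s.normal‖ = 1 := by
  cases s <;> simp [normal]

theorem gradCLM_normal_self (s : Side) : gradCLM s.normal s.normal = 1 := by
  cases s <;> simp [normal, gradCLM_apply]

theorem abs_gradCLM_normal_le (s : Side) (w : ℝ × ℝ) : |gradCLM s.normal w| ≤ ‖w‖ := by
  cases s <;> simp [normal, gradCLM_apply, ← Real.norm_eq_abs, norm_fst_le, norm_snd_le]

theorem abs_two_mul_gradCLM_sub_le (s : Side) {g v : ℝ × ℝ} {r : ℝ}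
    (hg : ‖(2 : ℝ) • g - v‖ ≤ r) : |2 * gradCLM g s.normal - gradCLM v s.normal| ≤ r := by
  rw [gradCLM_comm g, gradCLM_comm v, ← smul_eq_mul, ← map_smul, ← map_sub]
  exact (s.abs_gradCLM_normal_le _).trans hg

theorem eq_or_gradCLM_normal_nonpos (s t : Side) : t = s ∨ gradCLM t.normal s.normal ≤ 0 := by
  cases s <;> cases t <;> simp [normal, gradCLM_apply]

theorem gradCLM_normal_nonneg_or_eq_neg (s t : Side) :
    0 ≤ gradCLM t.normal s.normal ∨ t.normal = -s.normal := by
  cases s <;> cases t <;> simp [normal, gradCLM_apply]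

theorem piece_eq_Pc_sub (s : Side) (ℓ Γ : ℝ) (p : ℝ × ℝ) (a : ℝ) (g x : ℝ × ℝ) :
    s.piece ℓ Γ p a g x = Pc p a g x - Γ * (gradCLM s.normal (x - p) - ℓ / 2) := by
  cases s <;> simp only [piece, Pr, Pt, Pl, Pb, Pc, normal, gradCLM_apply, Prod.fst_sub,
    Prod.snd_sub] <;> ring

end Side

theorem Pc_eq (p : ℝ × ℝ) (a : ℝ) (g x : ℝ × ℝ) : Pc p a g x = gradCLM g (x - p) + a := by
  simp only [Pc, gradCLM_apply, Prod.fst_sub, Prod.snd_sub]; ring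

theorem Pc_add_smul (p : ℝ × ℝ) (a : ℝ) (g x v : ℝ × ℝ) (τ : ℝ) :
    Pc p a g (x + τ • v) = Pc p a g x + τ * gradCLM g v := by
  rw [Pc_eq, Pc_eq, add_sub_right_comm, map_add, map_smul, smul_eq_mul]; ring

theorem Side.piece_add_smul (s : Side) (ℓ Γ : ℝ) (p : ℝ × ℝ) (a : ℝ) (g x v : ℝ × ℝ) (τ : ℝ) :
    s.piece ℓ Γ p a g (x + τ • v) =
      s.piece ℓ Γ p a g x + τ * (gradCLM g v - Γ * gradCLM s.normal v) := by
  rw [s.piece_eq_Pc_sub, s.piece_eq_Pc_sub, Pc_add_smul, add_sub_right_comm x, map_add, map_smul,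
    smul_eq_mul]
  ring

theorem norm_le_of_forall_gradCLM_normal_le {w : ℝ × ℝ} {r : ℝ}
    (h : ∀ s : Side, gradCLM s.normal w ≤ r) : ‖w‖ ≤ r := by
  obtain ⟨h₁, h₂, h₃, h₄⟩ := Side.forall_iff.1 h
  simp only [Side.normal, gradCLM_apply] at h₁ h₂ h₃ h₄
  rw [norm_prod_le_iff, Real.norm_eq_abs, Real.norm_eq_abs, abs_le, abs_le]
  refine ⟨⟨?_, ?_⟩, ?_, ?_⟩ <;> linarith

section Mesa

variable {ℓ Γ c : ℝ} {p : ℝ × ℝ} {A : Fin 5 → ℝ} {g x : ℝ × ℝ}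

theorem le_mesa_iff : c ≤ mesa ℓ Γ p A g x ↔
    c ≤ Pc p (A 0) g x ∧ ∀ s : Side, c ≤ s.piece ℓ Γ p (A s.idx) g x := by
  simp only [mesa, le_min_iff, Side.forall_iff, Side.piece, Side.idx]

theorem lt_mesa_iff : c < mesa ℓ Γ p A g x ↔
    c < Pc p (A 0) g x ∧ ∀ s : Side, c < s.piece ℓ Γ p (A s.idx) g x := by
  simp only [mesa, lt_min_iff, Side.forall_iff, Side.piece, Side.idx]

theorem mesa_le_Pc : mesa ℓ Γ p A g x ≤ Pc p (A 0) g x :=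
  (le_mesa_iff.1 le_rfl).1

theorem mesa_le_piece (s : Side) : mesa ℓ Γ p A g x ≤ s.piece ℓ Γ p (A s.idx) g x :=
  (le_mesa_iff.1 le_rfl).2 s

theorem le_mesa_of_norm_sub_le (hΓ : 0 ≤ Γ) (hx : ‖x - p‖ ≤ ℓ / 2) (hA : ∀ i, c ≤ A i) :
    c - ‖g‖ * ℓ ≤ mesa ℓ Γ p A g x := by
  have hg : -(‖g‖ * ℓ) ≤ gradCLM g (x - p) := by
    have := mul_le_mul_of_nonneg_left hx (norm_nonneg g)
    linarith [neg_abs_le (gradCLM g (x - p)), abs_gradCLM_apply_le g (x - p)]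
  refine le_mesa_iff.2 ⟨by rw [Pc_eq]; linarith [hA 0], fun s => ?_⟩
  have hs : gradCLM s.normal (x - p) ≤ ℓ / 2 :=
    (le_abs_self _).trans ((s.abs_gradCLM_normal_le _).trans hx)
  rw [s.piece_eq_Pc_sub, Pc_eq]
  nlinarith [hA s.idx]

theorem norm_sub_le_of_le_mesa {C η : ℝ} (hΓ : 0 < Γ) (hc : c ≤ mesa ℓ Γ p A g x)
    (hA : ∀ i, A i ≤ C) (hg : gradCLM g (x - p) ≤ η) (hgap : C + η - c < Γ * ℓ / 2) :
    ‖x - p‖ ≤ ℓ := by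
  refine norm_le_of_forall_gradCLM_normal_le fun s => ?_
  have hs := hc.trans (mesa_le_piece s)
  rw [s.piece_eq_Pc_sub, Pc_eq] at hs
  by_contra! hlt
  nlinarith [hA s.idx, mul_lt_mul_of_pos_left hlt hΓ]

theorem gradCLM_normal_le_fderiv_of_Pc_lt_piece {f : ℝ × ℝ → ℝ} (hf : DifferentiableAt ℝ f x)
    (hmesa : ∀ y, mesa ℓ Γ p A g y ≤ f y) (hfx : f x = mesa ℓ Γ p A g x) (hΓ : 0 < Γ)
    (s : Side) (hlt : Pc p (A 0) g x < s.piece ℓ Γ p (A s.idx) g x) :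
    gradCLM g s.normal ≤ fderiv ℝ f x s.normal := by
  refine le_fderiv_apply_of_forall_add_mul_le hf (div_pos (sub_pos.2 hlt) hΓ) fun τ hτ => ?_
  have hΓτ : Γ * τ ≤ s.piece ℓ Γ p (A s.idx) g x - Pc p (A 0) g x :=
    (le_div_iff₀' hΓ).1 hτ.2
  have hm : mesa ℓ Γ p A g x ≤ Pc p (A 0) g x := mesa_le_Pc
  rw [hfx]
  refine le_trans (le_mesa_iff.2 ⟨?_, fun t => ?_⟩) (hmesa _)
  · rw [Pc_add_smul]; linarith
  · rw [t.piece_add_smul]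
    rcases s.eq_or_gradCLM_normal_nonpos t with rfl | ht
    · rw [t.gradCLM_normal_self]; linarith
    · have hmt : mesa ℓ Γ p A g x ≤ t.piece ℓ Γ p (A t.idx) g x := mesa_le_piece t
      nlinarith [mul_nonneg hΓ.le hτ.1.le]

theorem mesa_lt_mesa_of_piece_le {δ' a a' : ℝ} {p' g' : ℝ × ℝ} {A' : Fin 5 → ℝ} (hℓ : 0 ≤ ℓ)
    (hΓ : 0 ≤ Γ) (s : Side) (hp' : p' = p + ℓ • s.normal) (hA : ∀ i, |A i - a| ≤ δ')
    (hA' : ∀ i, |A' i - a'| ≤ δ')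
    (hcore : gradCLM g (x - p) + a + 4 * δ' < gradCLM g' (x - p') + a')
    (hle : s.piece ℓ Γ p (A s.idx) g x ≤ Pc p (A 0) g x) :
    mesa ℓ Γ p A g x < mesa ℓ Γ p' A' g' x := by
  have hm : mesa ℓ Γ p A g x ≤ Pc p (A 0) g x := mesa_le_Pc
  have hxp' : x - p' = (x - p) - ℓ • s.normal := by rw [hp', sub_add_eq_sub_sub]
  have hδ' : 0 ≤ δ' := (abs_nonneg _).trans (hA 0)
  rw [Pc_eq] at hm
  refine lt_mesa_iff.2 ⟨?_, fun t => ?_⟩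
  · rw [Pc_eq]; linarith [(abs_le.1 (hA 0)).2, (abs_le.1 (hA' 0)).1]
  have hn : gradCLM t.normal (x - p') =
      gradCLM t.normal (x - p) - ℓ * gradCLM t.normal s.normal := by
    rw [hxp', map_sub, map_smul, smul_eq_mul]
  rw [t.piece_eq_Pc_sub, Pc_eq, hn]
  rcases s.gradCLM_normal_nonneg_or_eq_neg t with hts | hts
  · have hmt : mesa ℓ Γ p A g x ≤ t.piece ℓ Γ p (A t.idx) g x := mesa_le_piece t
    rw [t.piece_eq_Pc_sub, Pc_eq] at hmt
    nlinarith [(abs_le.1 (hA t.idx)).2, (abs_le.1 (hA' t.idx)).1,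
      mul_nonneg hΓ (mul_nonneg hℓ hts)]
  · have hneg : ∀ v, gradCLM t.normal v = -gradCLM s.normal v := fun v => by
      rw [hts, gradCLM_comm, map_neg, gradCLM_comm]
    rw [s.piece_eq_Pc_sub, Pc_eq, Pc_eq] at hle
    rw [hneg, hneg, s.gradCLM_normal_self]
    nlinarith [(abs_le.1 (hA 0)).2, (abs_le.1 (hA s.idx)).1, (abs_le.1 (hA' t.idx)).1]

end Mesa

/-- With `w = x - p`, `b = h p` and `b' = h p'` for the neighbour `p' = p + ℓ • s.normal`: the
value gain `≈ ℓ ∂ₛh` beats the slope loss `≈ ℓ ∂ₛh / 2` of the neighbour's central plane. -/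
theorem Side.add_four_mul_lt_of_lt_gradCLM (s : Side) {ℓ ε δ' a a' b b' : ℝ} {g g' v w : ℝ × ℝ}
    (hℓ : 0 < ℓ) (hℓε : ℓ ≤ ε / 100) (hD : ε < gradCLM v s.normal) (hw : ‖w‖ ≤ ℓ)
    (hg : ‖(2 : ℝ) • g - v‖ ≤ ℓ / 20) (hg' : ‖(2 : ℝ) • g' - v‖ ≤ ℓ / 20)
    (ha : |a - b| ≤ ℓ ^ 2 / 100) (ha' : |a' - b'| ≤ ℓ ^ 2 / 100)
    (hb : |b' - b - ℓ * gradCLM v s.normal| ≤ ℓ ^ 2 / 25) (hδ' : δ' ≤ ℓ ^ 2 / 100) :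
    gradCLM g w + a + 4 * δ' < gradCLM g' (w - ℓ • s.normal) + a' := by
  have hgg : ‖g' - g‖ ≤ ℓ / 20 := by
    have h2 : (2 : ℝ) • (g' - g) = ((2 : ℝ) • g' - v) - ((2 : ℝ) • g - v) := by module
    have := norm_sub_le ((2 : ℝ) • g' - v) ((2 : ℝ) • g - v)
    rw [← h2, norm_smul, Real.norm_two] at this
    linarith
  have hw' : |gradCLM (g' - g) w| ≤ ℓ ^ 2 / 10 := by
    have := mul_le_mul hgg hw (norm_nonneg _) (by positivity)
    nlinarith [abs_gradCLM_apply_le (g' - g) w]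
  have hg'n := abs_le.1 (s.abs_two_mul_gradCLM_sub_le hg')
  rw [map_sub, map_smul, smul_eq_mul]
  rw [gradCLM_sub, sub_apply] at hw'
  nlinarith [abs_le.1 hw', abs_le.1 ha, abs_le.1 ha', abs_le.1 hb, mul_lt_mul_of_pos_left hD hℓ]

structure MesaApprox (ℓ δ' : ℝ) (h : ℝ × ℝ → ℝ) (h' : ℝ × ℝ → ℝ × ℝ) (p : ℝ × ℝ) (a : ℝ)
    (g : ℝ × ℝ) (A : Fin 5 → ℝ) : Prop where
  val_mem : a ∈ Icc (0.45 : ℝ) 0.55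
  abs_val_sub_le : |a - h p| ≤ ℓ ^ 2 / 100
  norm_grad_le : ‖g‖ ≤ 0.01
  norm_two_smul_grad_sub_le : ‖(2 : ℝ) • g - h' p‖ ≤ ℓ / 100
  abs_sub_val_le : ∀ i, |A i - a| ≤ δ'

theorem MesaApprox.norm_two_smul_grad_sub_le_of_norm_sub_le {ℓ δ' a : ℝ} {h : ℝ × ℝ → ℝ}
    {h' : ℝ × ℝ → ℝ × ℝ} {p g x : ℝ × ℝ} {A : Fin 5 → ℝ} (H : MesaApprox ℓ δ' h h' p a g A)
    (hlip : ‖h' x - h' p‖ ≤ ‖x - p‖ / 100) (hxp : ‖x - p‖ ≤ 2 * ℓ) :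
    ‖(2 : ℝ) • g - h' x‖ ≤ ℓ / 20 := by
  have := norm_sub_le_norm_sub_add_norm_sub ((2 : ℝ) • g) (h' p) (h' x)
  rw [norm_sub_rev (h' p)] at this
  linarith [H.norm_two_smul_grad_sub_le, norm_nonneg ((2 : ℝ) • g - h' p)]

section Grid

variable {N : ℕ} {ℓ : ℝ}

theorem pos_and_le_one_of_mul_natCast_eq_one (hℓN : ℓ * N = 1) : 0 < ℓ ∧ ℓ ≤ 1 := by
  have hN : (1 : ℝ) ≤ N := by
    rcases N.eq_zero_or_pos with rfl | hN
    · simp at hℓN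
    · exact_mod_cast hN
  constructor <;> nlinarith

theorem pt_mem_unitSq (hℓN : ℓ * N = 1) {k : ℕ × ℕ} (hk : k ∈ grid N) : pt ℓ k ∈ unitSq := by
  have hℓ := (pos_and_le_one_of_mul_natCast_eq_one hℓN).1
  simp only [grid, Finset.mem_product, Finset.mem_range, Nat.lt_succ_iff] at hk
  have h₁ : (k.1 : ℝ) ≤ N := by exact_mod_cast hk.1
  have h₂ : (k.2 : ℝ) ≤ N := by exact_mod_cast hk.2
  simp only [unitSq, pt, mem_ofPred_eq, mem_Icc]
  refine ⟨⟨by positivity, by nlinarith⟩, by positivity, by nlinarith⟩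

theorem exists_le_abs_sub_mul_le (hℓN : ℓ * N = 1) {t : ℝ} (ht : t ∈ Icc (0 : ℝ) 1) :
    ∃ n ≤ N, |t - n * ℓ| ≤ ℓ / 2 := by
  have hℓ := (pos_and_le_one_of_mul_natCast_eq_one hℓN).1
  have htN : 0 ≤ t * N + 1 / 2 := by have := ht.1; positivity
  have htℓ : t * N * ℓ = t := by rw [mul_assoc, mul_comm (N : ℝ), hℓN, mul_one]
  refine ⟨⌊t * N + 1 / 2⌋₊, Nat.lt_succ_iff.1 ((Nat.floor_lt htN).2 ?_), abs_le.2 ⟨?_, ?_⟩⟩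
  · push_cast; nlinarith [ht.2]
  · nlinarith [mul_le_mul_of_nonneg_right (Nat.floor_le htN) hℓ.le]
  · nlinarith [mul_le_mul_of_nonneg_right (Nat.lt_floor_add_one (t * N + 1 / 2)).le hℓ.le]

theorem exists_mem_grid_norm_sub_pt_le (hℓN : ℓ * N = 1) {x : ℝ × ℝ} (hx : x ∈ unitSq) :
    ∃ k ∈ grid N, ‖x - pt ℓ k‖ ≤ ℓ / 2 := by
  obtain ⟨n₁, hn₁, h₁⟩ := exists_le_abs_sub_mul_le hℓN hx.1
  obtain ⟨n₂, hn₂, h₂⟩ := exists_le_abs_sub_mul_le hℓN hx.2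
  refine ⟨(n₁, n₂), ?_, norm_prod_le_iff.2 ⟨h₁, h₂⟩⟩
  simp only [grid, Finset.mem_product, Finset.mem_range, Nat.lt_succ_iff]
  exact ⟨hn₁, hn₂⟩

theorem exists_mem_grid_pt_eq_add_normal (hℓN : ℓ * N = 1) {k : ℕ × ℕ} (hk : k ∈ grid N)
    {x : ℝ × ℝ} (hx : x ∈ unitSq) (s : Side) (hs : 0 < gradCLM s.normal (x - pt ℓ k)) :
    ∃ k' ∈ grid N, pt ℓ k' = pt ℓ k + ℓ • s.normal := by
  have hℓ := (pos_and_le_one_of_mul_natCast_eq_one hℓN).1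
  obtain ⟨⟨hx₁, hx₁'⟩, hx₂, hx₂'⟩ := hx
  simp only [grid, Finset.mem_product, Finset.mem_range, Nat.lt_succ_iff] at hk ⊢
  cases s <;> simp only [Side.normal, gradCLM_apply, pt, Prod.fst_sub, Prod.snd_sub] at hs
  · have : (k.1 : ℝ) < N := by nlinarith
    refine ⟨(k.1 + 1, k.2), ⟨by exact_mod_cast this, hk.2⟩, ?_⟩
    ext <;> simp [pt, Side.normal, add_mul]
  · have : (k.2 : ℝ) < N := by nlinarith
    refine ⟨(k.1, k.2 + 1), ⟨hk.1, by exact_mod_cast this⟩, ?_⟩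
    ext <;> simp [pt, Side.normal, add_mul]
  · have : 0 < k.1 := by
      have : (0 : ℝ) < k.1 := by nlinarith
      exact_mod_cast this
    refine ⟨(k.1 - 1, k.2), ⟨by omega, hk.2⟩, ?_⟩
    ext <;> simp [pt, Side.normal, Nat.cast_sub this, sub_mul, ← sub_eq_add_neg]
  · have : 0 < k.2 := by
      have : (0 : ℝ) < k.2 := by nlinarith
      exact_mod_cast this
    refine ⟨(k.1, k.2 - 1), ⟨hk.1, by omega⟩, ?_⟩
    ext <;> simp [pt, Side.normal, Nat.cast_sub this, sub_mul, ← sub_eq_add_neg]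

end Grid

def maxMesa (N : ℕ) (ℓ Γ : ℝ) (A : ℕ × ℕ → Fin 5 → ℝ) (g : ℕ × ℕ → ℝ × ℝ) (x : ℝ × ℝ) : ℝ :=
  (grid N).sup' (grid_nonempty N) fun k => mesa ℓ Γ (pt ℓ k) (A k) (g k) x

section MaxMesa

variable {N : ℕ} {ℓ Γ δ' ε : ℝ} {h : ℝ × ℝ → ℝ} {h' : ℝ × ℝ → ℝ × ℝ} {a : ℕ × ℕ → ℝ}
  {g : ℕ × ℕ → ℝ × ℝ} {A : ℕ × ℕ → Fin 5 → ℝ} {x : ℝ × ℝ}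

theorem mesa_le_maxMesa {k : ℕ × ℕ} (hk : k ∈ grid N) :
    mesa ℓ Γ (pt ℓ k) (A k) (g k) x ≤ maxMesa N ℓ Γ A g x :=
  Finset.le_sup' (fun k => mesa ℓ Γ (pt ℓ k) (A k) (g k) x) hk

theorem exists_maxMesa_eq_mesa_of_norm_sub_le (hℓN : ℓ * N = 1) (hΓℓ : 12 ≤ Γ * ℓ)
    (hδ' : δ' ≤ ℓ ^ 2 / 100)
    (happrox : ∀ k ∈ grid N, MesaApprox ℓ δ' h h' (pt ℓ k) (a k) (g k) (A k))
    (hx : x ∈ unitSq) :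
    ∃ k ∈ grid N, maxMesa N ℓ Γ A g x = mesa ℓ Γ (pt ℓ k) (A k) (g k) x ∧ ‖x - pt ℓ k‖ ≤ ℓ := by
  obtain ⟨hℓ, hℓ1⟩ := pos_and_le_one_of_mul_natCast_eq_one hℓN
  have hΓ : 0 < Γ := pos_of_mul_pos_left (by linarith) hℓ.le
  have hδ'1 : δ' ≤ 0.01 := by nlinarith
  have hlow : 0.43 ≤ maxMesa N ℓ Γ A g x := by
    obtain ⟨k, hk, hxk⟩ := exists_mem_grid_norm_sub_pt_le hℓN hx
    have H := happrox k hk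
    have hA : ∀ i, 0.45 - δ' ≤ A k i := fun i => by
      linarith [H.val_mem.1, (abs_le.1 (H.abs_sub_val_le i)).1]
    have : 0.45 - δ' - ‖g k‖ * ℓ ≤ maxMesa N ℓ Γ A g x :=
      (le_mesa_of_norm_sub_le hΓ.le hxk hA).trans (mesa_le_maxMesa hk)
    nlinarith [H.norm_grad_le]
  obtain ⟨k, hk, hfk⟩ : ∃ k ∈ grid N, maxMesa N ℓ Γ A g x = mesa ℓ Γ (pt ℓ k) (A k) (g k) x :=
    Finset.exists_mem_eq_sup' (grid_nonempty N) _
  have H := happrox k hk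
  have hA : ∀ i, A k i ≤ 0.55 + δ' := fun i => by
    linarith [H.val_mem.2, (abs_le.1 (H.abs_sub_val_le i)).2]
  have hg : gradCLM (g k) (x - pt ℓ k) ≤ 0.02 := by
    have := mul_le_mul H.norm_grad_le (norm_sub_le_one_of_mem_unitSq hx (pt_mem_unitSq hℓN hk))
      (norm_nonneg _) (by norm_num)
    linarith [le_abs_self (gradCLM (g k) (x - pt ℓ k)), abs_gradCLM_apply_le (g k) (x - pt ℓ k)]
  exact ⟨k, hk, hfk, norm_sub_le_of_le_mesa hΓ (hlow.trans_eq hfk) hA hg (by linarith)⟩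

theorem Pc_lt_piece_of_maxMesa_eq_mesa (hℓN : ℓ * N = 1) (hℓε : ℓ ≤ ε / 100)
    (hΓℓ : 12 ≤ Γ * ℓ) (hδ' : δ' ≤ ℓ ^ 2 / 100)
    (hderiv : ∀ y ∈ unitSq, HasFDerivWithinAt h (gradCLM (h' y)) unitSq y)
    (hlip : ∀ y ∈ unitSq, ∀ z ∈ unitSq, ‖h' y - h' z‖ ≤ ‖y - z‖ / 100)
    (happrox : ∀ k ∈ grid N, MesaApprox ℓ δ' h h' (pt ℓ k) (a k) (g k) (A k))
    (hx : x ∈ unitSq) {k : ℕ × ℕ} (hk : k ∈ grid N)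
    (hfk : maxMesa N ℓ Γ A g x = mesa ℓ Γ (pt ℓ k) (A k) (g k) x) (hxk : ‖x - pt ℓ k‖ ≤ ℓ)
    (s : Side) (hD : ε < gradCLM (h' x) s.normal) :
    Pc (pt ℓ k) (A k 0) (g k) x < s.piece ℓ Γ (pt ℓ k) (A k s.idx) (g k) x := by
  obtain ⟨hℓ, hℓ1⟩ := pos_and_le_one_of_mul_natCast_eq_one hℓN
  have hΓ : 0 < Γ := pos_of_mul_pos_left (by linarith) hℓ.le
  have H := happrox k hk
  by_contra! hle
  have hpos : 0 < gradCLM s.normal (x - pt ℓ k) := by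
    have hle' := hle
    rw [s.piece_eq_Pc_sub, Pc_eq, Pc_eq] at hle'
    by_contra! hnp
    nlinarith [(abs_le.1 (H.abs_sub_val_le 0)).2, (abs_le.1 (H.abs_sub_val_le s.idx)).1,
      mul_nonpos_of_nonneg_of_nonpos hΓ.le hnp]
  obtain ⟨k', hk', hpt⟩ := exists_mem_grid_pt_eq_add_normal hℓN hk hx s hpos
  have H' := happrox k' hk'
  have hp := pt_mem_unitSq hℓN hk
  have hp' := pt_mem_unitSq hℓN hk'
  have hxk' : ‖x - pt ℓ k'‖ ≤ 2 * ℓ := by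
    rw [hpt, ← sub_sub]
    refine (norm_sub_le _ _).trans ?_
    rw [norm_smul, s.norm_normal, Real.norm_of_nonneg hℓ.le]
    linarith
  have htaylor : |h (pt ℓ k') - h (pt ℓ k) - ℓ * gradCLM (h' x) s.normal| ≤ ℓ ^ 2 / 25 := by
    have := abs_sub_sub_gradCLM_le (convex_unitSq.inter (convex_closedBall x (2 * ℓ)))
      (fun y hy => (hderiv y hy.1).mono inter_subset_left)
      (fun y hy => (hlip y hy.1 x hx).trans
        (div_le_div_of_nonneg_right (mem_closedBall_iff_norm.1 hy.2) (by norm_num)))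
      ⟨hp, mem_closedBall_iff_norm.2 (by rw [norm_sub_rev]; linarith)⟩
      ⟨hp', mem_closedBall_iff_norm.2 (by rwa [norm_sub_rev])⟩
    rw [hpt, add_sub_cancel_left, map_smul, smul_eq_mul, norm_smul, s.norm_normal,
      Real.norm_of_nonneg hℓ.le, ← hpt] at this
    linarith
  have hcore := s.add_four_mul_lt_of_lt_gradCLM hℓ hℓε hD hxk
    (H.norm_two_smul_grad_sub_le_of_norm_sub_le (hlip x hx _ hp) (by linarith))
    (H'.norm_two_smul_grad_sub_le_of_norm_sub_le (hlip x hx _ hp') hxk')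
    H.abs_val_sub_le H'.abs_val_sub_le htaylor hδ'
  rw [sub_sub, ← hpt] at hcore
  exact (mesa_le_maxMesa hk').not_gt (hfk.trans_lt
    (mesa_lt_mesa_of_piece_le hℓ.le hΓ.le s hpt H.abs_sub_val_le H'.abs_sub_val_le hcore hle))

theorem lt_fderiv_maxMesa_normal (hℓN : ℓ * N = 1) (hℓε : ℓ ≤ ε / 100)
    (hΓℓ : 12 ≤ Γ * ℓ) (hδ' : δ' ≤ ℓ ^ 2 / 100)
    (hderiv : ∀ y ∈ unitSq, HasFDerivWithinAt h (gradCLM (h' y)) unitSq y)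
    (hlip : ∀ y ∈ unitSq, ∀ z ∈ unitSq, ‖h' y - h' z‖ ≤ ‖y - z‖ / 100)
    (happrox : ∀ k ∈ grid N, MesaApprox ℓ δ' h h' (pt ℓ k) (a k) (g k) (A k))
    (hx : x ∈ unitSq) (hdiff : DifferentiableAt ℝ (maxMesa N ℓ Γ A g) x) (s : Side)
    (hD : ε < gradCLM (h' x) s.normal) :
    ε / 3 < fderiv ℝ (maxMesa N ℓ Γ A g) x s.normal := by
  obtain ⟨hℓ, -⟩ := pos_and_le_one_of_mul_natCast_eq_one hℓN
  have hΓ : 0 < Γ := pos_of_mul_pos_left (by linarith) hℓ.le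
  obtain ⟨k, hk, hfk, hxk⟩ := exists_maxMesa_eq_mesa_of_norm_sub_le hℓN hΓℓ hδ' happrox hx
  have hder := gradCLM_normal_le_fderiv_of_Pc_lt_piece hdiff (fun y => mesa_le_maxMesa hk) hfk hΓ
    s (Pc_lt_piece_of_maxMesa_eq_mesa hℓN hℓε hΓℓ hδ' hderiv hlip happrox hx hk hfk hxk s hD)
  have hgk := s.abs_two_mul_gradCLM_sub_le ((happrox k hk).norm_two_smul_grad_sub_le_of_norm_sub_le
    (hlip x hx _ (pt_mem_unitSq hℓN hk)) (by linarith))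
  linarith [(abs_le.1 hgk).1]

end MaxMesa

theorem perturbed_mesa_preserves_violated_KKT_general
    (L : ℝ) (hL : L ≤ 1 / 100)
    (h : ℝ × ℝ → ℝ) (h' : ℝ × ℝ → ℝ × ℝ)
    (hderiv : ∀ x ∈ unitSq, HasFDerivWithinAt h (gradCLM (h' x)) unitSq x)
    (hlip : ∀ x ∈ unitSq, ∀ y ∈ unitSq, ‖h' x - h' y‖ ≤ L * ‖x - y‖)
    (ε : ℝ)
    (N : ℕ) (hN : 0 < N) (ℓ : ℝ) (hℓ : ℓ = 1 / N) (hℓε : ℓ ≤ ε / 100)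
    (Γ : ℝ) (hΓ : 12 / ℓ ≤ Γ)
    (a : ℕ × ℕ → ℝ)
    (ha : ∀ k ∈ grid N, a k ∈ Set.Icc (0.45 : ℝ) 0.55 ∧ |a k - h (pt ℓ k)| ≤ ℓ ^ 2 / 100)
    (g : ℕ × ℕ → ℝ × ℝ)
    (hg : ∀ k ∈ grid N,
      ((g k).1 ∈ Set.Icc (-0.01 : ℝ) 0.01 ∧ (g k).2 ∈ Set.Icc (-0.01 : ℝ) 0.01) ∧
      ‖(2 * (g k).1, 2 * (g k).2) - h' (pt ℓ k)‖ ≤ ℓ / 100)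
    (δ' : ℝ) (hδ' : δ' ≤ ℓ ^ 2 / 100)
    (A : ℕ × ℕ → Fin 5 → ℝ) (hA : ∀ k ∈ grid N, ∀ i, |A k i - a k| ≤ δ')
    (f : ℝ × ℝ → ℝ)
    (hf : ∀ x, f x = (grid N).sup' (grid_nonempty N) fun k => mesa ℓ Γ (pt ℓ k) (A k) (g k) x)
    (x : ℝ × ℝ) (hx : x ∈ unitSq) (hdiff : DifferentiableAt ℝ f x) :
    (0 < x.1 → ε < (h' x).1 → ε / 3 < fderiv ℝ f x (1, 0)) ∧
    (x.1 < 1 → (h' x).1 < -ε → fderiv ℝ f x (1, 0) < -(ε / 3)) ∧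
    (0 < x.2 → ε < (h' x).2 → ε / 3 < fderiv ℝ f x (0, 1)) ∧
    (x.2 < 1 → (h' x).2 < -ε → fderiv ℝ f x (0, 1) < -(ε / 3)) := by
  have hℓN : ℓ * N = 1 := by rw [hℓ]; field_simp
  have hℓ0 := (pos_and_le_one_of_mul_natCast_eq_one hℓN).1
  have hlip' : ∀ y ∈ unitSq, ∀ z ∈ unitSq, ‖h' y - h' z‖ ≤ ‖y - z‖ / 100 := fun y hy z hz =>
    (hlip y hy z hz).trans (by nlinarith [norm_nonneg (y - z)])
  have happrox : ∀ k ∈ grid N, MesaApprox ℓ δ' h h' (pt ℓ k) (a k) (g k) (A k) := fun k hk =>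
    { val_mem := (ha k hk).1
      abs_val_sub_le := (ha k hk).2
      norm_grad_le := norm_prod_le_iff.2
        ⟨abs_le.2 (hg k hk).1.1, abs_le.2 (hg k hk).1.2⟩
      norm_two_smul_grad_sub_le := (hg k hk).2
      abs_sub_val_le := hA k hk }
  obtain rfl : f = maxMesa N ℓ Γ A g := funext hf
  have key := lt_fderiv_maxMesa_normal hℓN hℓε ((div_le_iff₀ hℓ0).1 hΓ) hδ' hderiv hlip'
    happrox hx hdiff
  refine ⟨fun _ hD => key .right ?_, fun _ hD => ?_, fun _ hD => key .top ?_, fun _ hD => ?_⟩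
  · simpa [Side.normal, gradCLM_apply] using hD
  · have := key .left (by simp only [Side.normal, gradCLM_apply]; linarith)
    rw [Side.normal_left, map_neg] at this
    exact lt_neg.1 this
  · simpa [Side.normal, gradCLM_apply] using hD
  · have := key .bottom (by simp only [Side.normal, gradCLM_apply]; linarith)
    rw [Side.normal_bottom, map_neg] at this
    exact lt_neg.1 this

/-- Violated KKT conditions of the smooth function are preserved by every perturbed mesa
maximum.  Here `h' : ℝ × ℝ → ℝ × ℝ` is the gradient of `h` on the unit square,
`fderiv ℝ f x (1,0)` and `fderiv ℝ f x (0,1)` are the partial derivatives of `f` at `x`,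
and the norm on `ℝ × ℝ` is the sup-norm. -/
theorem perturbed_mesa_preserves_violated_KKT
    (L : ℝ) (hL : L ≤ 1 / 100)
    (h : ℝ × ℝ → ℝ) (h' : ℝ × ℝ → ℝ × ℝ)
    (hderiv : ∀ x ∈ unitSq, HasFDerivWithinAt h (gradCLM (h' x)) unitSq x)
    (hlip : ∀ x ∈ unitSq, ∀ y ∈ unitSq, ‖h' x - h' y‖ ≤ L * ‖x - y‖)
    (hval : ∀ x ∈ unitSq, h x ∈ Set.Icc (0.49 : ℝ) 0.51)
    (hgrad : ∀ x ∈ unitSq,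
      (h' x).1 ∈ Set.Icc (-0.001 : ℝ) 0.001 ∧ (h' x).2 ∈ Set.Icc (-0.001 : ℝ) 0.001)
    (ε : ℝ) (hε : 0 < ε)
    (N : ℕ) (hN : 0 < N) (ℓ : ℝ) (hℓ : ℓ = 1 / N) (hℓε : ℓ ≤ ε / 100)
    (Γ : ℝ) (hΓ : 12 / ℓ ≤ Γ)
    (a : ℕ × ℕ → ℝ)
    (ha : ∀ k ∈ grid N, a k ∈ Set.Icc (0.45 : ℝ) 0.55 ∧ |a k - h (pt ℓ k)| ≤ ℓ ^ 2 / 100)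
    (g : ℕ × ℕ → ℝ × ℝ)
    (hg : ∀ k ∈ grid N,
      ((g k).1 ∈ Set.Icc (-0.01 : ℝ) 0.01 ∧ (g k).2 ∈ Set.Icc (-0.01 : ℝ) 0.01) ∧
      ‖(2 * (g k).1, 2 * (g k).2) - h' (pt ℓ k)‖ ≤ ℓ / 100)
    (δ' : ℝ) (hδ' : δ' ≤ ℓ ^ 2 / 100)
    (A : ℕ × ℕ → Fin 5 → ℝ) (hA : ∀ k ∈ grid N, ∀ i, |A k i - a k| ≤ δ')
    (f : ℝ × ℝ → ℝ)
    (hf : ∀ x, f x = (grid N).sup' (grid_nonempty N) fun k => mesa ℓ Γ (pt ℓ k) (A k) (g k) x)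
    (x : ℝ × ℝ) (hx : x ∈ unitSq) (hdiff : DifferentiableAt ℝ f x) :
    (0 < x.1 → ε < (h' x).1 → ε / 3 < fderiv ℝ f x (1, 0)) ∧
    (x.1 < 1 → (h' x).1 < -ε → fderiv ℝ f x (1, 0) < -(ε / 3)) ∧
    (0 < x.2 → ε < (h' x).2 → ε / 3 < fderiv ℝ f x (0, 1)) ∧
    (x.2 < 1 → (h' x).2 < -ε → fderiv ℝ f x (0, 1) < -(ε / 3)) :=
  perturbed_mesa_preserves_violated_KKT_general L hL h h' hderiv hlip ε N hN ℓ hℓ hℓε Γ hΓ a ha g hg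
    δ' hδ' A hA f hf x hx hdiff
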